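/- Let n ≥ 5, Z_n(x,y,z,a) be the 4-perturbed reciprocal matrix with x,y,z,a > 0, and w its Perron eigenvector with eigenvalue r. If min{x,z} ≥ 1 and x ≠ z, then w_n ≠ w_3. -/

import Mathlib

/-- The reciprocal matrix `Z_n(x,y,z,a)`: all entries equal to one except
(in 1-based indexing) `(1,n-1) = y`, `(1,n) = x`, `(2,n-1) = a`, `(2,n) = z`
and the reciprocals at the transposed positions. -/
noncomputable def Zmat (n : ℕ) (x y z a : ℝ) : Matrix (Fin n) (Fin n) ℝ :=
  fun i j =>
    if i.val = 0 ∧ j.val = n - 2 then y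
    else if i.val = 0 ∧ j.val = n - 1 then x
    else if i.val = 1 ∧ j.val = n - 2 then a
    else if i.val = 1 ∧ j.val = n - 1 then z
    else if i.val = n - 2 ∧ j.val = 0 then y⁻¹
    else if i.val = n - 1 ∧ j.val = 0 then x⁻¹
    else if i.val = n - 2 ∧ j.val = 1 then a⁻¹
    else if i.val = n - 1 ∧ j.val = 1 then z⁻¹
    else 1

/-- if `min {x, z} ≥ 1` and `x ≠ z`, then `w_n ≠ w_3`. -/
theorem zmat_wn_ne_w3 (n : ℕ) (hn : 5 ≤ n) (x y z a : ℝ)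
    (hx : 0 < x) (hy : 0 < y) (hz : 0 < z) (ha : 0 < a)
    (r : ℝ) (w : Fin n → ℝ) (hw : ∀ i, 0 < w i)
    (heig : (Zmat n x y z a).mulVec w = r • w)
    (h1x : 1 ≤ x) (h1z : 1 ≤ z) (hne : x ≠ z) :
    w ⟨n - 1, by omega⟩ ≠ w ⟨2, by omega⟩ := by
  intro hEq
  let i0 : Fin n := ⟨0, by omega⟩
  let i1 : Fin n := ⟨1, by omega⟩
  let iN : Fin n := ⟨n - 1, by omega⟩
  let i2 : Fin n := ⟨2, by omega⟩
  have hrowN : ∀ j : Fin n, Zmat n x y z a iN j =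
      if j = i0 then x⁻¹ else if j = i1 then z⁻¹ else 1 := by
    intro j
    have e1 : ¬(n - 1 = 0) := by omega
    have e2 : ¬(n - 1 = 1) := by omega
    have e3 : ¬(n - 1 = n - 2) := by omega
    have : (iN : Fin n).val = n - 1 := rfl
    simp only [Zmat, this, e1, e2, e3, false_and, if_false, true_and, if_true]
    by_cases h0 : j = i0
    · have : j.val = 0 := by rw [h0]
      simp [this, h0, i0]
    · have hv0 : ¬(j.val = 0) := by
        intro hc
        exact h0 (Fin.ext hc)
      by_cases h1 : j = i1
      · have : j.val = 1 := by rw [h1]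
        simp only [this, h0, h1, hv0, if_false, if_true]
        rw [if_neg (show ¬(i1 : Fin n) = i0 by
          intro hc
          have h := congrArg Fin.val hc
          simp at h)]
        norm_num
      · have hv1 : ¬(j.val = 1) := by
          intro hc
          exact h1 (Fin.ext hc)
        simp [hv0, hv1, h0, h1]
  have hrow2 : ∀ j : Fin n, Zmat n x y z a i2 j = 1 := by
    intro j
    have e1 : ¬((2:ℕ) = 0) := by omega
    have e2 : ¬((2:ℕ) = 1) := by omega
    have e3 : ¬((2:ℕ) = n - 2) := by omega
    have e4 : ¬((2:ℕ) = n - 1) := by omega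
    have hv : (i2 : Fin n).val = 2 := rfl
    simp only [Zmat, hv, e1, e2, e3, e4, false_and, if_false]
  have hN : ∑ j, Zmat n x y z a iN j * w j = r * w iN := by
    have := congrFun heig iN
    simpa [Matrix.mulVec, dotProduct] using this
  have h2 : ∑ j, Zmat n x y z a i2 j * w j = r * w i2 := by
    have := congrFun heig i2
    simpa [Matrix.mulVec, dotProduct] using this
  have hne01 : i0 ≠ i1 := by
    intro hc
    have : (0:ℕ) = 1 := congrArg Fin.val hc
    omega
  have hsumN : ∑ j, Zmat n x y z a iN j * w j
      = (x⁻¹ - 1) * w i0 + (z⁻¹ - 1) * w i1 + ∑ j, w j := by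
    have key : ∀ j : Fin n, Zmat n x y z a iN j * w j
        = ((if j = i0 then (x⁻¹ - 1) * w i0 else 0)
          + (if j = i1 then (z⁻¹ - 1) * w i1 else 0)) + w j := by
      intro j
      rw [hrowN j]
      by_cases h0 : j = i0
      · subst h0
        rw [if_pos rfl, if_pos rfl, if_neg hne01]
        ring
      · by_cases h1 : j = i1
        · subst h1
          rw [if_neg h0, if_neg h0, if_pos rfl, if_pos rfl]
          ring
        · rw [if_neg h0, if_neg h0, if_neg h1, if_neg h1]
          ring
    rw [Finset.sum_congr rfl (fun j _ => key j)]
    rw [Finset.sum_add_distrib, Finset.sum_add_distrib]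
    rw [Finset.sum_ite_eq' Finset.univ i0 (fun _ => (x⁻¹ - 1) * w i0),
        Finset.sum_ite_eq' Finset.univ i1 (fun _ => (z⁻¹ - 1) * w i1)]
    simp
  have hsum2 : ∑ j, Zmat n x y z a i2 j * w j = ∑ j, w j := by
    refine Finset.sum_congr rfl fun j _ => ?_
    rw [hrow2 j, one_mul]
  have hkey : (x⁻¹ - 1) * w i0 + (z⁻¹ - 1) * w i1 = 0 := by
    have e1 : (x⁻¹ - 1) * w i0 + (z⁻¹ - 1) * w i1 + ∑ j, w j = r * w iN := by
      rw [← hsumN]; exact hN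
    have e2 : (∑ j, w j) = r * w i2 := by rw [← hsum2]; exact h2
    have hEq' : w iN = w i2 := hEq
    rw [hEq'] at e1
    linarith
  have hxinv : x⁻¹ ≤ 1 := inv_le_one_of_one_le₀ h1x
  have hzinv : z⁻¹ ≤ 1 := inv_le_one_of_one_le₀ h1z
  have hw0 := hw i0
  have hw1 := hw i1
  have ha1 : (x⁻¹ - 1) * w i0 ≤ 0 := mul_nonpos_of_nonpos_of_nonneg (by linarith) hw0.le
  have hb1 : (z⁻¹ - 1) * w i1 ≤ 0 := mul_nonpos_of_nonpos_of_nonneg (by linarith) hw1.le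
  have hax : (x⁻¹ - 1) * w i0 = 0 := by linarith
  have haz : (z⁻¹ - 1) * w i1 = 0 := by linarith
  have hx1 : x = 1 := by
    have h : x⁻¹ - 1 = 0 := by
      rcases mul_eq_zero.mp hax with h | h
      · exact h
      · exact absurd h hw0.ne'
    have h' : x⁻¹ = 1 := by linarith
    field_simp at h'
    linarith
  have hz1 : z = 1 := by
    have h : z⁻¹ - 1 = 0 := by
      rcases mul_eq_zero.mp haz with h | h
      · exact h
      · exact absurd h hw1.ne'
    have h' : z⁻¹ = 1 := by linarith
    field_simp at h'
    linarith
  exact hne (hx1.trans hz1.symm)
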